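/- The point (2, 1 − 1/√3) is the unique minimizer over ℝ² of the function p ↦ ‖p − (1,1)‖₂ + ‖p − (3,1)‖₂ + ‖p − (2,0)‖₂; i.e., (2, 1 − 1/√3) is the Fermat point (geometric median) of the triangle with vertices (1,1), (3,1), (2,0). -/

import Mathlib

/-- The point `(a, b)` of the Euclidean plane. -/
noncomputable def pt (a b : ℝ) : EuclideanSpace ℝ (Fin 2) := WithLp.toLp 2 ![a, b]


lemma norm_pt (p : EuclideanSpace ℝ (Fin 2)) (a b : ℝ) :
    ‖p - pt a b‖ = Real.sqrt ((p 0 - a)^2 + (p 1 - b)^2) := by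
  rw [EuclideanSpace.norm_eq]
  simp [pt, Fin.sum_univ_two, sq_abs]

lemma cs_le (c d x y : ℝ) (h : c^2 + d^2 = 1) :
    c*x + d*y ≤ Real.sqrt (x^2 + y^2) := by
  rcases le_or_gt (c*x + d*y) 0 with h0 | h0
  · exact h0.trans (Real.sqrt_nonneg _)
  · rw [Real.le_sqrt h0.le (by positivity)]
    nlinarith [sq_nonneg (d*x - c*y)]

lemma cs_lt (c d x y : ℝ) (h : c^2 + d^2 = 1) (hne : d*x ≠ c*y) :
    c*x + d*y < Real.sqrt (x^2 + y^2) := by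
  have hpos : 0 < x^2 + y^2 := by
    rcases eq_or_ne x 0 with hx | hx
    · rcases eq_or_ne y 0 with hy | hy
      · exfalso; apply hne; rw [hx, hy]; ring
      · positivity
    · positivity
  rcases le_or_gt (c*x + d*y) 0 with h0 | h0
  · exact lt_of_le_of_lt h0 (Real.sqrt_pos.mpr hpos)
  · rw [show c*x + d*y = Real.sqrt ((c*x+d*y)^2) from (Real.sqrt_sq h0.le).symm]
    apply Real.sqrt_lt_sqrt (by positivity)
    nlinarith [sq_nonneg (d*x - c*y), pow_pos (abs_pos.mpr (sub_ne_zero.mpr hne)) 2,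
      sq_abs (d*x - c*y)]

lemma key (x y : ℝ) (h : x ≠ 2 ∨ y ≠ 1 - 1 / Real.sqrt 3) :
    Real.sqrt 3 + 1 <
      Real.sqrt ((x-1)^2 + (y-1)^2) + Real.sqrt ((x-3)^2 + (y-1)^2) +
        Real.sqrt ((x-2)^2 + y^2) := by
  set s3 := Real.sqrt 3 with hs3def
  have hs3sq : s3^2 = 3 := Real.sq_sqrt (by norm_num)
  have hs3gt1 : 1 < s3 := by
    have : Real.sqrt 1 < Real.sqrt 3 := Real.sqrt_lt_sqrt (by norm_num) (by norm_num)
    simpa using this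
  have hs3pos : 0 < s3 := by linarith
  have huA : (s3/2)^2 + (-(1:ℝ)/2)^2 = 1 := by field_simp; nlinarith
  have huB : (-(s3/2))^2 + (-(1:ℝ)/2)^2 = 1 := by field_simp; nlinarith
  have huC : (0:ℝ)^2 + (1:ℝ)^2 = 1 := by norm_num
  have hA := cs_le (s3/2) (-(1:ℝ)/2) (x-1) (y-1) huA
  have hB := cs_le (-(s3/2)) (-(1:ℝ)/2) (x-3) (y-1) huB
  have hC := cs_le 0 1 (x-2) y huC
  rcases eq_or_ne x 2 with hx2 | hx2
  · have hy2 : y ≠ 1 - 1/s3 := by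
      rcases h with h | h
      · exact absurd hx2 h
      · exact h
    have hA' := cs_lt (s3/2) (-(1:ℝ)/2) (x-1) (y-1) huA (by
      intro hcon
      apply hy2
      rw [hx2] at hcon
      have hy1 : y - 1 = -(1/s3) := by
        field_simp at hcon ⊢
        nlinarith
      linarith)
    linarith [hA', hB, hC]
  · have hC' := cs_lt 0 1 (x-2) y huC (by
      intro hcon
      apply hx2
      have : x - 2 = 0 := by linarith [hcon]
      linarith)
    linarith [hA, hB, hC']

/-- The point `(2, 1 - 1/√3)` is the unique minimizer over `ℝ²` of
`p ↦ ‖p - (1,1)‖ + ‖p - (3,1)‖ + ‖p - (2,0)‖`; i.e. it is the Fermat point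
(geometric median) of the triangle with vertices `(1,1)`, `(3,1)`, `(2,0)`. -/
theorem fermat_point_of_triangle :
    ∀ p : EuclideanSpace ℝ (Fin 2),
      p ≠ pt 2 (1 - 1 / Real.sqrt 3) →
        ‖pt 2 (1 - 1 / Real.sqrt 3) - pt 1 1‖ +
          ‖pt 2 (1 - 1 / Real.sqrt 3) - pt 3 1‖ +
          ‖pt 2 (1 - 1 / Real.sqrt 3) - pt 2 0‖ <
        ‖p - pt 1 1‖ + ‖p - pt 3 1‖ + ‖p - pt 2 0‖ := by
  intro p hp
  have hs3sq : (Real.sqrt 3)^2 = 3 := Real.sq_sqrt (by norm_num)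
  have hs3gt1 : 1 < Real.sqrt 3 := by
    have : Real.sqrt 1 < Real.sqrt 3 := Real.sqrt_lt_sqrt (by norm_num) (by norm_num)
    simpa using this
  have hs3pos : 0 < Real.sqrt 3 := by linarith
  have hf0 : (pt 2 (1 - 1/Real.sqrt 3)) 0 = 2 := rfl
  have hf1 : (pt 2 (1 - 1/Real.sqrt 3)) 1 = 1 - 1/Real.sqrt 3 := rfl
  rw [norm_pt, norm_pt, norm_pt, norm_pt, norm_pt, norm_pt, hf0, hf1]
  have eA : Real.sqrt ((2-1)^2 + ((1 - 1/Real.sqrt 3) - 1)^2) = 2/Real.sqrt 3 := by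
    rw [show ((2-1)^2 + ((1 - 1/Real.sqrt 3) - 1)^2 : ℝ) = (2/Real.sqrt 3)^2 by
      field_simp; nlinarith]
    exact Real.sqrt_sq (by positivity)
  have eB : Real.sqrt ((2-3)^2 + ((1 - 1/Real.sqrt 3) - 1)^2) = 2/Real.sqrt 3 := by
    rw [show ((2-3)^2 + ((1 - 1/Real.sqrt 3) - 1)^2 : ℝ) = (2/Real.sqrt 3)^2 by
      field_simp; nlinarith]
    exact Real.sqrt_sq (by positivity)
  have eC : Real.sqrt ((2-2)^2 + ((1 - 1/Real.sqrt 3) - 0)^2) = 1 - 1/Real.sqrt 3 := by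
    rw [show ((2-2)^2 + ((1 - 1/Real.sqrt 3) - 0)^2 : ℝ) = (1 - 1/Real.sqrt 3)^2 by ring]
    refine Real.sqrt_sq ?_
    have : 1/Real.sqrt 3 < 1 := by rw [div_lt_one hs3pos]; exact hs3gt1
    linarith
  rw [eA, eB, eC]
  have hlhs : 2/Real.sqrt 3 + 2/Real.sqrt 3 + (1 - 1/Real.sqrt 3) = Real.sqrt 3 + 1 := by
    field_simp; nlinarith
  rw [hlhs]
  have hne : p 0 ≠ 2 ∨ p 1 ≠ 1 - 1/Real.sqrt 3 := by
    by_contra h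
    push_neg at h
    apply hp
    ext i
    fin_cases i
    · exact h.1
    · exact h.2
  have := key (p 0) (p 1) hne
  simpa using this
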